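/- arXiv:2501.11002 — 2 statements merged into one kernel-verified Lean document; each statement's English description precedes it below -/
import Mathlib

section
/- Let E be a real Hilbert space (e.g. EuclideanSpace ℝ (Fin d)), F : E → ℝ differentiable with gradient ∇F that is L-Lipschitz (L ≥ 0). Fix θ ∈ E and η ∈ ℝ with η ≥ 0. Let (Ω, ℙ) be a probability space and g : Ω → E an integrable random vector such that E[g] = ∇F(θ) and E[‖g − ∇F(θ)‖²] ≤ σ². Then E[F(θ − η • g)] ≤ F(θ) − (η − L·η²/2)·‖∇F(θ)‖² + (L·η²/2)·σ². -/
/-!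
Along the segment from `x` to `x + v` the directional derivative of `F` drifts from
`⟪∇F x, v⟫` by at most `L t ‖v‖²`, which integrates to the descent lemma
`F (x + v) ≤ F x + ⟪∇F x, v⟫ + L/2 ‖v‖²`. Applied with `v = -η g ω` and averaged over `ω`,
the linear term has mean `-η ‖∇F θ‖²` by unbiasedness, and the second moment of `g` splits as
`‖∇F θ‖²` plus the variance.
-/

open MeasureTheory

open Set in
theorem le_add_deriv_add_of_deriv_sub_le {φ φ' : ℝ → ℝ} {K : ℝ}
    (hφ : ∀ t, HasDerivAt φ (φ' t) t) (hK : ∀ t ∈ Icc (0 : ℝ) 1, φ' t - φ' 0 ≤ K * t) :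
    φ 1 ≤ φ 0 + φ' 0 + K / 2 := by
  have hψ : ∀ t, HasDerivAt (fun t => φ t - t * φ' 0 - K / 2 * t ^ 2) (φ' t - φ' 0 - K * t) t :=
    fun t => (((hφ t).sub ((hasDerivAt_id t).mul_const _)).sub
      ((hasDerivAt_pow 2 t).const_mul _)).congr_deriv (by simp; ring)
  have hanti : AntitoneOn (fun t => φ t - t * φ' 0 - K / 2 * t ^ 2) (Icc 0 1) :=
    antitoneOn_of_hasDerivWithinAt_nonpos (convex_Icc 0 1)
      (HasDerivAt.continuousOn fun t _ => hψ t) (fun t _ => (hψ t).hasDerivWithinAt)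
      (fun t ht => sub_nonpos.2 (hK t (interior_subset ht)))
  have hends := hanti (left_mem_Icc.2 zero_le_one) (right_mem_Icc.2 zero_le_one) zero_le_one
  norm_num at hends
  linarith

section

variable {E : Type*} [NormedAddCommGroup E] [InnerProductSpace ℝ E]

theorem hasDerivAt_apply_add_smul [CompleteSpace E] {F : E → ℝ} (hF : Differentiable ℝ F)
    (x v : E) (t : ℝ) :
    HasDerivAt (fun t : ℝ => F (x + t • v)) (inner ℝ (gradient F (x + t • v)) v) t := by
  have hline : HasDerivAt (fun t : ℝ => x + t • v) v t := by
    simpa using ((hasDerivAt_id t).smul_const v).const_add x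
  exact ((hF _).hasGradientAt.hasFDerivAt.comp_hasDerivAt t hline).congr_deriv (by simp)

theorem apply_add_le_of_norm_gradient_sub_le [CompleteSpace E] {F : E → ℝ}
    (hF : Differentiable ℝ F) {L : ℝ} {x : E}
    (hlip : ∀ y, ‖gradient F y - gradient F x‖ ≤ L * ‖y - x‖) (v : E) :
    F (x + v) ≤ F x + inner ℝ (gradient F x) v + L / 2 * ‖v‖ ^ 2 := by
  have key := le_add_deriv_add_of_deriv_sub_le (K := L * ‖v‖ ^ 2)
    (hasDerivAt_apply_add_smul hF x v) fun t ht => by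
      rw [zero_smul, add_zero, ← inner_sub_left]
      calc inner ℝ (gradient F (x + t • v) - gradient F x) v
          ≤ ‖gradient F (x + t • v) - gradient F x‖ * ‖v‖ := real_inner_le_norm _ _
        _ ≤ L * ‖(x + t • v) - x‖ * ‖v‖ := by gcongr; exact hlip _
        _ = L * ‖v‖ ^ 2 * t := by
          rw [add_sub_cancel_left, norm_smul, Real.norm_of_nonneg ht.1]; ring
  simpa [mul_div_right_comm] using key

theorem apply_sub_smul_le_of_norm_gradient_sub_le [CompleteSpace E] {F : E → ℝ}
    (hF : Differentiable ℝ F) {L : ℝ} {x : E}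
    (hlip : ∀ y, ‖gradient F y - gradient F x‖ ≤ L * ‖y - x‖) (η : ℝ) (w : E) :
    F (x - η • w) ≤ F x - η * inner ℝ (gradient F x) w + L * η ^ 2 / 2 * ‖w‖ ^ 2 := by
  have hdescent := apply_add_le_of_norm_gradient_sub_le hF hlip (-(η • w))
  rw [← sub_eq_add_neg, inner_neg_right, real_inner_smul_right, norm_neg, norm_smul, mul_pow,
    Real.norm_eq_abs, sq_abs] at hdescent
  linarith

section Moments

variable {Ω : Type*} [MeasurableSpace Ω] {μ : Measure Ω} {g : Ω → E}

theorem MeasureTheory.Integrable.norm_sq_of_norm_sub_sq [IsFiniteMeasure μ] (hg : Integrable g μ)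
    (c : E) (hgc : Integrable (fun ω => ‖g ω - c‖ ^ 2) μ) : Integrable (fun ω => ‖g ω‖ ^ 2) μ := by
  have hexpand : (fun ω => ‖g ω‖ ^ 2) = fun ω => ‖g ω - c‖ ^ 2 + 2 * inner ℝ c (g ω) - ‖c‖ ^ 2 := by
    ext ω; rw [norm_sub_sq_real, real_inner_comm]; ring
  rw [hexpand]
  exact (hgc.add ((hg.const_inner c).const_mul 2)).sub (integrable_const _)

theorem integral_norm_sq_eq_norm_integral_sq_add [CompleteSpace E] [IsProbabilityMeasure μ]
    (hg : Integrable g μ) (hgc : Integrable (fun ω => ‖g ω - ∫ ω, g ω ∂μ‖ ^ 2) μ) :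
    ∫ ω, ‖g ω‖ ^ 2 ∂μ = ‖∫ ω, g ω ∂μ‖ ^ 2 + ∫ ω, ‖g ω - ∫ ω, g ω ∂μ‖ ^ 2 ∂μ := by
  set m := ∫ ω, g ω ∂μ
  have hcross : Integrable (fun ω => 2 * inner ℝ m (g ω)) μ := (hg.const_inner m).const_mul 2
  have hexpand : (fun ω => ‖g ω - m‖ ^ 2)
      = fun ω => ‖g ω‖ ^ 2 - 2 * inner ℝ m (g ω) + ‖m‖ ^ 2 := by
    ext ω; rw [norm_sub_sq_real, real_inner_comm]
  rw [hexpand, integral_add (f := fun ω => ‖g ω‖ ^ 2 - 2 * inner ℝ m (g ω))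
    ((hg.norm_sq_of_norm_sub_sq m hgc).sub hcross) (integrable_const _),
    integral_sub (hg.norm_sq_of_norm_sub_sq m hgc) hcross, integral_const_mul, integral_inner hg,
    real_inner_self_eq_norm_sq, integral_const, probReal_univ, one_smul]
  ring

end Moments

end

theorem expected_descent_one_step_general
    {E : Type*} [NormedAddCommGroup E] [InnerProductSpace ℝ E] [CompleteSpace E]
    (F : E → ℝ) (hF : Differentiable ℝ F)
    (L : ℝ) (hL : 0 ≤ L)
    (hlip : ∀ x y : E, ‖gradient F x - gradient F y‖ ≤ L * ‖x - y‖)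
    (θ : E) (η : ℝ)
    {Ωs : Type*} [MeasureSpace Ωs]
    (hprob : IsProbabilityMeasure (volume : Measure Ωs))
    (g : Ωs → E) (σ : ℝ)
    (hg_int : Integrable g)
    (hg_sq_int : Integrable (fun ω => ‖g ω - gradient F θ‖ ^ 2))
    (hF_int : Integrable (fun ω => F (θ - η • g ω)))
    (hg_mean : ∫ ω, g ω = gradient F θ)
    (hg_var : ∫ ω, ‖g ω - gradient F θ‖ ^ 2 ≤ σ ^ 2) :
    ∫ ω, F (θ - η • g ω)
      ≤ F θ - (η - L * η ^ 2 / 2) * ‖gradient F θ‖ ^ 2 + (L * η ^ 2 / 2) * σ ^ 2 := by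
  have hstep := apply_sub_smul_le_of_norm_gradient_sub_le hF (hlip · θ) η
  have hsq_int := hg_int.norm_sq_of_norm_sub_sq _ hg_sq_int
  have hsecond := integral_norm_sq_eq_norm_integral_sq_add hg_int (hg_mean ▸ hg_sq_int)
  rw [hg_mean] at hsecond
  have hinner_int : Integrable (fun ω => η * inner ℝ (gradient F θ) (g ω)) :=
    (hg_int.const_inner _).const_mul η
  calc ∫ ω, F (θ - η • g ω)
      ≤ ∫ ω, (F θ - η * inner ℝ (gradient F θ) (g ω) + L * η ^ 2 / 2 * ‖g ω‖ ^ 2) :=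
        integral_mono hF_int
          (((integrable_const _).sub hinner_int).add (hsq_int.const_mul _)) fun ω => hstep (g ω)
    _ = F θ - η * ‖gradient F θ‖ ^ 2 + L * η ^ 2 / 2 * ∫ ω, ‖g ω‖ ^ 2 := by
        rw [integral_add (f := fun ω => F θ - η * inner ℝ (gradient F θ) (g ω))
          ((integrable_const _).sub hinner_int) (hsq_int.const_mul _),
          integral_sub (integrable_const _) hinner_int, integral_const_mul, integral_const_mul,
          integral_inner hg_int, hg_mean, real_inner_self_eq_norm_sq, integral_const,
          probReal_univ, one_smul]
    _ ≤ _ := by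
        rw [hsecond]
        have hcoef : 0 ≤ L * η ^ 2 / 2 := by positivity
        linarith [mul_le_mul_of_nonneg_left hg_var hcoef]

/-- Smoothness-based expected decrease for one stochastic gradient step:
if `F` is differentiable with `L`-Lipschitz gradient and `g` is an unbiased
stochastic gradient at `θ` with variance at most `σ²`, then a step of size
`η ≥ 0` satisfies
`E[F(θ - η g)] ≤ F(θ) - (η - L η²/2) ‖∇F(θ)‖² + (L η²/2) σ²`. -/
theorem expected_descent_one_step
    {E : Type*} [NormedAddCommGroup E] [InnerProductSpace ℝ E] [CompleteSpace E]
    (F : E → ℝ) (hF : Differentiable ℝ F)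
    (L : ℝ) (hL : 0 ≤ L)
    (hlip : ∀ x y : E, ‖gradient F x - gradient F y‖ ≤ L * ‖x - y‖)
    (θ : E) (η : ℝ) (hη : 0 ≤ η)
    {Ωs : Type*} [MeasureSpace Ωs]
    (hprob : IsProbabilityMeasure (volume : Measure Ωs))
    (g : Ωs → E) (σ : ℝ)
    (hg_int : Integrable g)
    (hg_sq_int : Integrable (fun ω => ‖g ω - gradient F θ‖ ^ 2))
    (hF_int : Integrable (fun ω => F (θ - η • g ω)))
    (hg_mean : ∫ ω, g ω = gradient F θ)
    (hg_var : ∫ ω, ‖g ω - gradient F θ‖ ^ 2 ≤ σ ^ 2) :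
    ∫ ω, F (θ - η • g ω)
      ≤ F θ - (η - L * η ^ 2 / 2) * ‖gradient F θ‖ ^ 2 + (L * η ^ 2 / 2) * σ ^ 2 :=
  expected_descent_one_step_general F hF L hL hlip θ η hprob g σ hg_int hg_sq_int hF_int hg_mean
    hg_var
end

section
/- Let E be a real Hilbert space, F : E → ℝ differentiable with L-Lipschitz gradient (L > 0) and bounded below by F* (F(x) ≥ F* for all x). Fix a constant effective step size η with 0 < η ≤ 1/L and T ≥ 1. Let (Ω, ℙ) be a probability space with random vectors θ^0, θ^1, …, θ^T : Ω → E and g^0, …, g^{T−1} : Ω → E such that for every t < T: θ^{t+1} = θ^t − η • g^t, the conditional expectation of g^t given σ(θ^0,…,θ^t) equals ∇F(θ^t) almost surely, and E[‖g^t − ∇F(θ^t)‖² | σ(θ^0,…,θ^t)] ≤ σ² almost surely (all stated integrability holding). Then (1/T)·∑_{t=0}^{T−1} E[‖∇F(θ^t)‖²] ≤ 2(E[F(θ^0)] − F*)/(T·η) + L·η·σ². -/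
/-!
For an `L`-smooth `F`, one step `θ ↦ θ - η • g` satisfies the descent inequality
`F (θ - η • g) ≤ F θ - η ⟪∇F θ, g⟫ + L η² / 2 ‖g‖²`. Conditional unbiasedness makes `g - ∇F θ`
orthogonal in `L²` to every function of the past, so `E ⟪∇F θ, g⟫ = E ‖∇F θ‖²` and
`E ‖g‖² = E ‖∇F θ‖² + E ‖g - ∇F θ‖² ≤ E ‖∇F θ‖² + σ²`. With `L η ≤ 1` each step lowers `E F` by at
least `η / 2 · E ‖∇F θ‖² - L η² σ² / 2`, and telescoping down to `F*` gives the rate.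
-/

open MeasureTheory Finset
open scoped RealInnerProductSpace

section Smooth

variable {E : Type*} [NormedAddCommGroup E] [InnerProductSpace ℝ E] [CompleteSpace E]
  {F : E → ℝ} {L : ℝ}

theorem Differentiable.hasDerivAt_comp_add_smul (hF : Differentiable ℝ F) (x v : E) (s : ℝ) :
    HasDerivAt (fun s : ℝ => F (x + s • v)) ⟪gradient F (x + s • v), v⟫ s := by
  have hline : HasDerivAt (fun s : ℝ => x + s • v) v s := by
    simpa using ((hasDerivAt_id s).smul_const v).const_add x
  simpa [Function.comp_def] using (hF _).hasGradientAt.hasFDerivAt.comp_hasDerivAt s hline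

theorem le_add_inner_gradient_add_sq_of_lipschitz (hF : Differentiable ℝ F)
    (hlip : ∀ x y : E, ‖gradient F x - gradient F y‖ ≤ L * ‖x - y‖) (x y : E) :
    F y ≤ F x + ⟪gradient F x, y - x⟫ + L / 2 * ‖y - x‖ ^ 2 := by
  set v := y - x
  let ψ : ℝ → ℝ := fun s => F (x + s • v) - s * ⟪gradient F x, v⟫ - L / 2 * s ^ 2 * ‖v‖ ^ 2
  have hψ : ∀ s, HasDerivAt ψ
      (⟪gradient F (x + s • v), v⟫ - ⟪gradient F x, v⟫ - L * s * ‖v‖ ^ 2) s := by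
    intro s
    have hquad := ((hasDerivAt_pow 2 s).const_mul (L / 2)).mul_const (‖v‖ ^ 2)
    exact (((hF.hasDerivAt_comp_add_smul x v s).sub
      ((hasDerivAt_id s).mul_const ⟪gradient F x, v⟫)).sub hquad).congr_deriv
      (by push_cast; ring)
  have hanti : AntitoneOn ψ (Set.Icc 0 1) := by
    refine antitoneOn_of_hasDerivWithinAt_nonpos (convex_Icc 0 1)
      (fun s _ => (hψ s).continuousAt.continuousWithinAt)
      (fun s _ => (hψ s).hasDerivWithinAt) fun s hs => ?_
    rw [interior_Icc] at hs
    have hgrad : ⟪gradient F (x + s • v) - gradient F x, v⟫ ≤ L * s * ‖v‖ ^ 2 :=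
      calc ⟪gradient F (x + s • v) - gradient F x, v⟫
          ≤ ‖gradient F (x + s • v) - gradient F x‖ * ‖v‖ := real_inner_le_norm _ _
        _ ≤ L * ‖x + s • v - x‖ * ‖v‖ := by gcongr; exact hlip _ _
        _ = L * s * ‖v‖ ^ 2 := by
          rw [add_sub_cancel_left, norm_smul, Real.norm_of_nonneg hs.1.le]
          ring
    rw [inner_sub_left] at hgrad
    linarith
  have h01 := hanti (by simp) (by simp) zero_le_one
  simp only [ψ, v, zero_smul, add_zero, one_smul, add_sub_cancel] at h01
  linarith

end Smooth

section Conditional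

variable {Ω E : Type*} {m m0 : MeasurableSpace Ω} {μ : Measure Ω}
  [NormedAddCommGroup E] [InnerProductSpace ℝ E]

theorem MeasureTheory.MemLp.integrable_inner {f g : Ω → E} (hf : MemLp f 2 μ) (hg : MemLp g 2 μ) :
    Integrable (fun ω => ⟪f ω, g ω⟫) μ :=
  (L2.integrable_inner (hf.toLp f) (hg.toLp g)).congr <| by
    filter_upwards [hf.coeFn_toLp, hg.coeFn_toLp] with ω hfω hgω
    rw [hfω, hgω]

theorem integral_le_of_condExp_le [IsProbabilityMeasure μ] (hm : m ≤ m0) {f : Ω → ℝ} {c : ℝ}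
    (hf : ∀ᵐ ω ∂μ, μ[f | m] ω ≤ c) : ∫ ω, f ω ∂μ ≤ c := by
  rw [← integral_condExp hm]
  simpa using integral_mono_ae integrable_condExp (integrable_const c) hf

theorem integral_norm_sq_eq_zero_of_condExp_eq_of_not_le (hm : ¬m ≤ m0) {X g : Ω → E}
    (hmean : μ[g | m] =ᵐ[μ] X) : ∫ ω, ‖X ω‖ ^ 2 ∂μ = 0 := by
  rw [condExp_of_not_le hm] at hmean
  rw [integral_congr_ae (g := 0) (hmean.mono fun ω hω => by simp [← hω])]
  simp

theorem integral_inner_eq_integral_norm_sq_of_condExp_eq [CompleteSpace E] [IsFiniteMeasure μ]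
    (hm : m ≤ m0) {X g : Ω → E} (hmean : μ[g | m] =ᵐ[μ] X) (hg : Integrable g μ)
    (hXg : Integrable (fun ω => ⟪X ω, g ω⟫) μ) :
    ∫ ω, ⟪X ω, g ω⟫ ∂μ = ∫ ω, ‖X ω‖ ^ 2 ∂μ := by
  have hX : AEStronglyMeasurable[m] X μ :=
    stronglyMeasurable_condExp.aestronglyMeasurable.congr hmean
  calc ∫ ω, ⟪X ω, g ω⟫ ∂μ = ∫ ω, (μ[fun ω => ⟪X ω, g ω⟫ | m]) ω ∂μ :=
        (integral_condExp hm).symm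
    _ = ∫ ω, ⟪X ω, (μ[g | m]) ω⟫ ∂μ :=
        integral_congr_ae (condExp_bilin_of_aestronglyMeasurable_left (innerSL ℝ) hX hXg hg)
    _ = ∫ ω, ‖X ω‖ ^ 2 ∂μ :=
        integral_congr_ae (hmean.mono fun ω hω => by simp only [hω, real_inner_self_eq_norm_sq])

theorem integral_norm_sq_eq_add_of_condExp_eq [CompleteSpace E] [IsFiniteMeasure μ]
    (hm : m ≤ m0) {X g : Ω → E} (hmean : μ[g | m] =ᵐ[μ] X) (hg : Integrable g μ)
    (hX : MemLp X 2 μ) (hgX : MemLp (fun ω => g ω - X ω) 2 μ) :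
    ∫ ω, ‖g ω‖ ^ 2 ∂μ = ∫ ω, ‖X ω‖ ^ 2 ∂μ + ∫ ω, ‖g ω - X ω‖ ^ 2 ∂μ := by
  have hXg : Integrable (fun ω => ⟪X ω, g ω⟫) μ :=
    hX.integrable_inner (by simpa only [Pi.add_def, sub_add_cancel] using hgX.add hX)
  have hX2 := (memLp_two_iff_integrable_sq_norm hX.1).1 hX
  have hgX2 := (memLp_two_iff_integrable_sq_norm hgX.1).1 hgX
  have hexpand : ∀ ω, ‖g ω‖ ^ 2 = 2 * ⟪X ω, g ω⟫ - ‖X ω‖ ^ 2 + ‖g ω - X ω‖ ^ 2 := fun ω => by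
    rw [norm_sub_sq_real, real_inner_comm]
    ring
  rw [integral_congr_ae (ae_of_all _ hexpand),
    integral_add (f := fun ω => 2 * ⟪X ω, g ω⟫ - ‖X ω‖ ^ 2) ((hXg.const_mul 2).sub hX2) hgX2,
    integral_sub (hXg.const_mul 2) hX2, integral_const_mul,
    integral_inner_eq_integral_norm_sq_of_condExp_eq hm hmean hg hXg]
  ring

end Conditional

section Descent

variable {Ω E : Type*} {m m0 : MeasurableSpace Ω} {μ : Measure Ω}
  [NormedAddCommGroup E] [InnerProductSpace ℝ E] [CompleteSpace E] {F : E → ℝ} {L : ℝ}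

theorem apply_sub_smul_le_of_lipschitz_gradient (hF : Differentiable ℝ F)
    (hlip : ∀ x y : E, ‖gradient F x - gradient F y‖ ≤ L * ‖x - y‖) (x v : E) (η : ℝ) :
    F (x - η • v) ≤ F x - η * ⟪gradient F x, v⟫ + L * η ^ 2 / 2 * ‖v‖ ^ 2 := by
  have h := le_add_inner_gradient_add_sq_of_lipschitz hF hlip x (x - η • v)
  rw [sub_sub_cancel_left, inner_neg_right, real_inner_smul_right, norm_neg, norm_smul,
    Real.norm_eq_abs, mul_pow, sq_abs] at h
  linarith

theorem integral_apply_sub_smul_le [IsProbabilityMeasure μ] (hm : m ≤ m0)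
    (hF : Differentiable ℝ F) (hlip : ∀ x y : E, ‖gradient F x - gradient F y‖ ≤ L * ‖x - y‖)
    (hL : 0 ≤ L) {η σ : ℝ} (hη : 0 ≤ η) (hLη : L * η ≤ 1) {θ g : Ω → E}
    (hmean : μ[g | m] =ᵐ[μ] fun ω => gradient F (θ ω))
    (hvar : ∀ᵐ ω ∂μ, μ[fun ω => ‖g ω - gradient F (θ ω)‖ ^ 2 | m] ω ≤ σ ^ 2)
    (hg : Integrable g μ) (hgrad : Integrable (fun ω => ‖gradient F (θ ω)‖ ^ 2) μ)
    (hdev : Integrable (fun ω => ‖g ω - gradient F (θ ω)‖ ^ 2) μ)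
    (hFθ : Integrable (fun ω => F (θ ω)) μ) (hFθ' : Integrable (fun ω => F (θ ω - η • g ω)) μ) :
    η / 2 * ∫ ω, ‖gradient F (θ ω)‖ ^ 2 ∂μ
      ≤ ∫ ω, F (θ ω) ∂μ - ∫ ω, F (θ ω - η • g ω) ∂μ + L * η ^ 2 * σ ^ 2 / 2 := by
  have hXm : AEStronglyMeasurable (fun ω => gradient F (θ ω)) μ :=
    (stronglyMeasurable_condExp.aestronglyMeasurable.congr hmean).mono hm
  have hX2 := (memLp_two_iff_integrable_sq_norm hXm).2 hgrad
  have hgX2 : MemLp (fun ω => g ω - gradient F (θ ω)) 2 μ :=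
    (memLp_two_iff_integrable_sq_norm (hg.1.sub hXm)).2 hdev
  have hg2 : MemLp g 2 μ := by simpa only [Pi.add_def, sub_add_cancel] using hgX2.add hX2
  have hXg := hX2.integrable_inner hg2
  have hgsq := (memLp_two_iff_integrable_sq_norm hg.1).1 hg2
  have hinner := integral_inner_eq_integral_norm_sq_of_condExp_eq hm hmean hg hXg
  have hsecond := integral_norm_sq_eq_add_of_condExp_eq hm hmean hg hX2 hgX2
  have hV := integral_le_of_condExp_le hm hvar
  have hdesc : ∫ ω, F (θ ω - η • g ω) ∂μ ≤ ∫ ω, (F (θ ω) - η * ⟪gradient F (θ ω), g ω⟫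
      + L * η ^ 2 / 2 * ‖g ω‖ ^ 2) ∂μ :=
    integral_mono hFθ' ((hFθ.sub (hXg.const_mul η)).add (hgsq.const_mul _))
    fun ω => apply_sub_smul_le_of_lipschitz_gradient hF hlip (θ ω) (g ω) η
  rw [integral_add (f := fun ω => F (θ ω) - η * ⟪gradient F (θ ω), g ω⟫)
      (hFθ.sub (hXg.const_mul η)) (hgsq.const_mul _),
    integral_sub hFθ (hXg.const_mul η), integral_const_mul, integral_const_mul,
    hinner, hsecond] at hdesc
  have hI : 0 ≤ ∫ ω, ‖gradient F (θ ω)‖ ^ 2 ∂μ := integral_nonneg fun ω => sq_nonneg _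
  nlinarith [mul_nonneg (mul_nonneg hη (sub_nonneg.2 hLη)) hI,
    mul_le_mul_of_nonneg_left hV (by positivity : 0 ≤ L * η ^ 2 / 2)]

end Descent

theorem Finset.sum_range_le_sub_add_of_le_sub_add {a b : ℕ → ℝ} {c : ℝ} {n : ℕ}
    (h : ∀ t < n, a t ≤ b t - b (t + 1) + c) :
    ∑ t ∈ range n, a t ≤ b 0 - b n + n * c :=
  calc ∑ t ∈ range n, a t ≤ ∑ t ∈ range n, (b t - b (t + 1) + c) :=
        sum_le_sum fun t ht => h t (mem_range.1 ht)
    _ = b 0 - b n + n * c := by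
        rw [sum_add_distrib, sum_range_sub', sum_const, card_range, nsmul_eq_mul]

theorem Finset.sum_range_le_sub_add_of_le_sub_add_while {a f : ℕ → ℝ} {B c : ℝ} {n : ℕ}
    (P : ℕ → Prop) (hP : ∀ t, P (t + 1) → P t) (hc : 0 ≤ c) (hB : ∀ t ≤ n, B ≤ f t)
    (hwhile : ∀ t < n, P t → a t ≤ f t - f (t + 1) + c) (hafter : ∀ t < n, ¬P t → a t ≤ 0) :
    ∑ t ∈ range n, a t ≤ f 0 - B + n * c := by
  classical
  let b : ℕ → ℝ := fun t => if P t then f t else B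
  have hb_le : ∀ t ≤ n, b t ≤ f t := fun t ht => by
    simp only [b]; split_ifs
    exacts [le_rfl, hB t ht]
  have hb_ge : ∀ t ≤ n, B ≤ b t := fun t ht => by
    simp only [b]; split_ifs
    exacts [hB t ht, le_rfl]
  have hstep : ∀ t < n, a t ≤ b t - b (t + 1) + c := fun t ht => by
    by_cases hPt : P t
    · have hbt : b t = f t := if_pos hPt
      linarith [hwhile t ht hPt, hb_le (t + 1) ht]
    · simp only [b, if_neg hPt, if_neg (mt (hP t) hPt)]
      linarith [hafter t ht hPt]
  linarith [sum_range_le_sub_add_of_le_sub_add hstep, hb_le 0 n.zero_le, hb_ge n le_rfl]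

theorem one_div_mul_le_of_half_mul_le {S D c η : ℝ} {T : ℕ} (hη : 0 < η) (hc : 0 ≤ c)
    (h : η / 2 * S ≤ D + T * c) : 1 / (T : ℝ) * S ≤ 2 * D / (T * η) + 2 * c / η := by
  rcases Nat.eq_zero_or_pos T with rfl | hT
  · simp only [Nat.cast_zero, div_zero, zero_mul, zero_add]
    positivity
  calc 1 / (T : ℝ) * S = 2 / (T * η) * (η / 2 * S) := by field_simp
    _ ≤ 2 / (T * η) * (D + T * c) := by gcongr
    _ = 2 * D / (T * η) + 2 * c / η := by field_simp

theorem nonconvex_rate_general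
    {E : Type*} [NormedAddCommGroup E] [InnerProductSpace ℝ E] [CompleteSpace E]
    [MeasurableSpace E]
    {Ωs : Type*} [MeasureSpace Ωs]
    (hprob : IsProbabilityMeasure (volume : Measure Ωs))
    (F : E → ℝ) (hF : Differentiable ℝ F)
    (L : ℝ) (hL : 0 < L)
    (hlip : ∀ x y : E, ‖gradient F x - gradient F y‖ ≤ L * ‖x - y‖)
    (Fstar : ℝ) (hFstar : ∀ x, Fstar ≤ F x)
    (η : ℝ) (hη0 : 0 < η) (hηL : η ≤ 1 / L)
    (T : ℕ)
    (θ g : ℕ → Ωs → E) (σ : ℝ)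
    -- the σ-algebra generated by the past iterates θ^0, …, θ^t
    (m : ℕ → MeasurableSpace Ωs)
    (hm : ∀ t, m t = ⨆ s ∈ Finset.range (t + 1), MeasurableSpace.comap (θ s) inferInstance)
    -- the update rule θ^{t+1} = θ^t - η • g^t
    (hupd : ∀ t < T, ∀ ω, θ (t + 1) ω = θ t ω - η • g t ω)
    -- integrability of all stated quantities
    (hg_int : ∀ t < T, Integrable (g t))
    (hgsq_int : ∀ t < T, Integrable (fun ω => ‖g t ω - gradient F (θ t ω)‖ ^ 2))
    (hgradsq_int : ∀ t < T, Integrable (fun ω => ‖gradient F (θ t ω)‖ ^ 2))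
    (hF_int : ∀ t ≤ T, Integrable (fun ω => F (θ t ω)))
    -- conditional unbiasedness: E[g^t | σ(θ^0,…,θ^t)] = ∇F(θ^t) a.s.
    (hcond_mean : ∀ t < T,
      (volume[g t | m t]) =ᵐ[volume] fun ω => gradient F (θ t ω))
    -- conditional variance bound: E[‖g^t - ∇F(θ^t)‖² | σ(θ^0,…,θ^t)] ≤ σ² a.s.
    (hcond_var : ∀ t < T,
      ∀ᵐ ω ∂(volume : Measure Ωs),
        (volume[fun ω' => ‖g t ω' - gradient F (θ t ω')‖ ^ 2 | m t]) ω ≤ σ ^ 2) :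
    (1 / (T : ℝ)) * ∑ t ∈ range T, ∫ ω, ‖gradient F (θ t ω)‖ ^ 2
      ≤ 2 * ((∫ ω, F (θ 0 ω)) - Fstar) / ((T : ℝ) * η) + L * η * σ ^ 2 := by
  have := hprob
  have hLη : L * η ≤ 1 := by rwa [le_div_iff₀ hL, mul_comm] at hηL
  have hfiltration : ∀ t, m t ≤ m (t + 1) := fun t => by
    rw [hm t, hm (t + 1)]
    exact biSup_mono fun i hi => by simp only [mem_range] at hi ⊢; omega
  have hFstar_le : ∀ t ≤ T, Fstar ≤ ∫ ω, F (θ t ω) := fun t ht => by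
    simpa using integral_mono (integrable_const Fstar) (hF_int t ht) fun ω => hFstar (θ t ω)
  -- The iterates need not be measurable: once `m t` is not a sub-σ-algebra, `volume[g t | m t]`
  -- is the junk value `0`, which forces `∇F (θ t) = 0` a.e., and the telescoping stops there.
  have hsum := Finset.sum_range_le_sub_add_of_le_sub_add_while
    (a := fun t => η / 2 * ∫ ω, ‖gradient F (θ t ω)‖ ^ 2)
    (fun t => m t ≤ MeasureSpace.toMeasurableSpace) (fun t h => (hfiltration t).trans h)
    (by positivity : 0 ≤ L * η ^ 2 * σ ^ 2 / 2) hFstar_le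
    (fun t ht hmt => by
      simpa only [← hupd t ht] using integral_apply_sub_smul_le hmt hF hlip hL.le hη0.le hLη
        (hcond_mean t ht) (hcond_var t ht) (hg_int t ht) (hgradsq_int t ht) (hgsq_int t ht)
        (hF_int t ht.le) (by simpa only [← hupd t ht] using hF_int (t + 1) ht))
    (fun t ht hmt => by
      rw [integral_norm_sq_eq_zero_of_condExp_eq_of_not_le hmt (hcond_mean t ht), mul_zero])
  rw [← mul_sum] at hsum
  convert one_div_mul_le_of_half_mul_le hη0 (by positivity) hsum using 2
  field_simp

/-- Nonconvex convergence rate for pMixFed viewed as SGD with constant effective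
step size `η ≤ 1/L`: if the stochastic gradients are conditionally unbiased with
conditional variance at most `σ²` given the past iterates, then
`(1/T) ∑_{t<T} E[‖∇F(θ^t)‖²] ≤ 2 (E[F(θ^0)] - F*) / (T η) + L η σ²`. -/
theorem nonconvex_rate
    {E : Type*} [NormedAddCommGroup E] [InnerProductSpace ℝ E] [CompleteSpace E]
    [MeasurableSpace E] [BorelSpace E]
    {Ωs : Type*} [MeasureSpace Ωs]
    (hprob : IsProbabilityMeasure (volume : Measure Ωs))
    (F : E → ℝ) (hF : Differentiable ℝ F)
    (L : ℝ) (hL : 0 < L)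
    (hlip : ∀ x y : E, ‖gradient F x - gradient F y‖ ≤ L * ‖x - y‖)
    (Fstar : ℝ) (hFstar : ∀ x, Fstar ≤ F x)
    (η : ℝ) (hη0 : 0 < η) (hηL : η ≤ 1 / L)
    (T : ℕ) (hT : 1 ≤ T)
    (θ g : ℕ → Ωs → E) (σ : ℝ)
    -- the σ-algebra generated by the past iterates θ^0, …, θ^t
    (m : ℕ → MeasurableSpace Ωs)
    (hm : ∀ t, m t = ⨆ s ∈ Finset.range (t + 1), MeasurableSpace.comap (θ s) inferInstance)
    -- the update rule θ^{t+1} = θ^t - η • g^t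
    (hupd : ∀ t < T, ∀ ω, θ (t + 1) ω = θ t ω - η • g t ω)
    -- integrability of all stated quantities
    (hg_int : ∀ t < T, Integrable (g t))
    (hgsq_int : ∀ t < T, Integrable (fun ω => ‖g t ω - gradient F (θ t ω)‖ ^ 2))
    (hgradsq_int : ∀ t < T, Integrable (fun ω => ‖gradient F (θ t ω)‖ ^ 2))
    (hF_int : ∀ t ≤ T, Integrable (fun ω => F (θ t ω)))
    -- conditional unbiasedness: E[g^t | σ(θ^0,…,θ^t)] = ∇F(θ^t) a.s.
    (hcond_mean : ∀ t < T,
      (volume[g t | m t]) =ᵐ[volume] fun ω => gradient F (θ t ω))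
    -- conditional variance bound: E[‖g^t - ∇F(θ^t)‖² | σ(θ^0,…,θ^t)] ≤ σ² a.s.
    (hcond_var : ∀ t < T,
      ∀ᵐ ω ∂(volume : Measure Ωs),
        (volume[fun ω' => ‖g t ω' - gradient F (θ t ω')‖ ^ 2 | m t]) ω ≤ σ ^ 2) :
    (1 / (T : ℝ)) * ∑ t ∈ range T, ∫ ω, ‖gradient F (θ t ω)‖ ^ 2
      ≤ 2 * ((∫ ω, F (θ 0 ω)) - Fstar) / ((T : ℝ) * η) + L * η * σ ^ 2 :=
  nonconvex_rate_general hprob F hF L hL hlip Fstar hFstar η hη0 hηL T θ g σ m hm hupd hg_int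
    hgsq_int hgradsq_int hF_int hcond_mean hcond_var
end
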